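/- arXiv:1403.5479 — 3 statements merged into one kernel-verified Lean document; each statement's English description precedes it below -/
import Mathlib

section
/- Let λ > 0 and let t, τ be reals with 0 ≤ t ≤ τ. Then ∫_{-∞}^{∞} (1 − exp(−λ · max(min(t, a + τ) − max(a, 0), 0))) da = 2t + (1 − e^{−λt})(τ − t − 2/λ). -/
open MeasureTheory Real

/-!
The integrand is `φ (overlap t τ a)` with `φ x = 1 - exp (-l x)`, where `overlap t τ a` is the
length of `[a, a + τ] ∩ [0, t]`. For `t ≤ τ` this length, as a function of `a`, is a trapezoid:
zero off `[-τ, t]`, rising as `a + τ` on `[-τ, t - τ]`, equal to `t` on `[t - τ, 0]` and falling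
as `t - a` on `[0, t]`. Since `φ 0 = 0`, only `[-τ, t]` matters; after a translation or a
reflection each slope contributes `∫₀ᵗ φ = t - (1 - e^{-lt}) / l`, and the plateau `(τ - t) φ t`.
-/

namespace BoxModel

open Set intervalIntegral

def overlap (t τ a : ℝ) : ℝ := max (min t (a + τ) - max a 0) 0

variable {t τ a : ℝ}

theorem continuous_overlap (t τ : ℝ) : Continuous (overlap t τ) := by
  unfold overlap; fun_prop

theorem overlap_eq_zero_of_notMem (ha : a ∉ Ioc (-τ) t) : overlap t τ a = 0 := by
  rw [mem_Ioc, not_and_or, not_lt, not_le] at ha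
  refine max_eq_right ?_
  rcases ha with ha | ha
  · linarith [min_le_right t (a + τ), le_max_right a 0]
  · linarith [min_le_left t (a + τ), le_max_left a 0]

theorem overlap_eq_add_of_mem_Icc (htτ : t ≤ τ) (ha : a ∈ Icc (-τ) (t - τ)) :
    overlap t τ a = a + τ := by
  rw [overlap, max_eq_right (show a ≤ 0 by linarith [ha.2]),
    min_eq_right (show a + τ ≤ t by linarith [ha.2]), sub_zero, max_eq_left (by linarith [ha.1])]

theorem overlap_eq_of_mem_Icc (ht : 0 ≤ t) (ha : a ∈ Icc (t - τ) 0) :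
    overlap t τ a = t := by
  rw [overlap, max_eq_right ha.2, min_eq_left (show t ≤ a + τ by linarith [ha.1]), sub_zero,
    max_eq_left ht]

theorem overlap_eq_sub_of_mem_Icc (htτ : t ≤ τ) (ha : a ∈ Icc 0 t) : overlap t τ a = t - a := by
  rw [overlap, max_eq_left ha.1, min_eq_left (show t ≤ a + τ by linarith [ha.1]),
    max_eq_left (by linarith [ha.2])]

theorem integral_comp_overlap {φ : ℝ → ℝ} (hφ : Continuous φ) (hφ0 : φ 0 = 0) (ht : 0 ≤ t)
    (htτ : t ≤ τ) :
    ∫ a, φ (overlap t τ a) = 2 * (∫ x in 0..t, φ x) + (τ - t) * φ t := by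
  have hI (p q : ℝ) : IntervalIntegrable (fun a ↦ φ (overlap t τ a)) volume p q :=
    (hφ.comp (continuous_overlap t τ)).intervalIntegrable p q
  have hsupp : Function.support (fun a ↦ φ (overlap t τ a)) ⊆ Ioc (-τ) t := fun a ha ↦
    by_contra fun h ↦ ha (by simp only [overlap_eq_zero_of_notMem h, hφ0])
  have rising : ∫ a in -τ..t - τ, φ (overlap t τ a) = ∫ x in 0..t, φ x := by
    rw [integral_congr (g := fun a ↦ φ (a + τ)) fun a ha ↦ by
      rw [overlap_eq_add_of_mem_Icc htτ (uIcc_of_le (by linarith : -τ ≤ t - τ) ▸ ha)],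
      integral_comp_add_right]
    simp
  have plateau : ∫ a in t - τ..0, φ (overlap t τ a) = (τ - t) * φ t := by
    rw [integral_congr (g := fun _ ↦ φ t) fun a ha ↦ by
      rw [overlap_eq_of_mem_Icc ht (uIcc_of_le (by linarith : t - τ ≤ 0) ▸ ha)],
      intervalIntegral.integral_const, smul_eq_mul]
    ring
  have falling : ∫ a in 0..t, φ (overlap t τ a) = ∫ x in 0..t, φ x := by
    rw [integral_congr (g := fun a ↦ φ (t - a)) fun a ha ↦ by
      rw [overlap_eq_sub_of_mem_Icc htτ (uIcc_of_le ht ▸ ha)], integral_comp_sub_left]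
    simp
  rw [← integral_eq_integral_of_support_subset hsupp,
    ← integral_add_adjacent_intervals (hI _ (t - τ)) (hI _ t),
    ← integral_add_adjacent_intervals (hI _ 0) (hI _ t), rising, plateau, falling]
  ring

theorem integral_one_sub_exp_neg_mul {l : ℝ} (hl : l ≠ 0) (t : ℝ) :
    ∫ x in 0..t, (1 - exp (-l * x)) = t - (1 - exp (-l * t)) / l := by
  rw [integral_sub intervalIntegrable_const ((by fun_prop : Continuous _).intervalIntegrable _ _),
    intervalIntegral.integral_const,
    integral_comp_mul_left (fun x ↦ exp x) (neg_ne_zero.mpr hl), integral_exp]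
  simp only [smul_eq_mul, mul_one, sub_zero, mul_zero, exp_zero]
  field_simp
  ring

end BoxModel

open BoxModel in
/-- Deterministic core of the Box Model mean-function computation, case `τ ≥ t`
(Proposition 2): for fixed rate `l > 0` and lifespan `τ ≥ t ≥ 0`,
`∫ (1 − exp(−l·|[a, a+τ] ∩ [0, t]|)) da = 2t + (1 − e^{−lt})(τ − t − 2/l)`. -/
theorem box_model_integral_of_le (l t τ : ℝ) (hl : 0 < l) (ht : 0 ≤ t) (htτ : t ≤ τ) :
    ∫ a : ℝ, (1 - Real.exp (-l * max (min t (a + τ) - max a 0) 0)) =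
      2 * t + (1 - Real.exp (-l * t)) * (τ - t - 2 / l) := by
  refine (integral_comp_overlap (φ := fun x ↦ 1 - exp (-l * x)) (by fun_prop) (by simp) ht
    htτ).trans ?_
  rw [integral_one_sub_exp_neg_mul hl.ne']
  field_simp
  ring
end

section
/- Let λ > 0 and let t, τ be reals with 0 < τ < t. Then ∫_{-∞}^{∞} (1 − exp(−λ · max(min(t, a + τ) − max(a, 0), 0))) da = 2τ + (1 − e^{−λτ})(t − τ − 2/λ). -/
/-!
The overlap length `|[a, a+τ] ∩ [0, t]|` rises linearly from `0` to `τ` on `[-τ, 0]`, stays at `τ`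
on `[0, t-τ]`, falls linearly back to `0` on `[t-τ, t]` and vanishes elsewhere. Hence for any
continuous `φ` with `φ 0 = 0` the integral of `φ` of the overlap is `(t - τ) φ(τ) + 2 ∫₀^τ φ`,
and for `φ x = 1 - e^{-λx}` the last integral is `τ - (1 - e^{-λτ})/λ`.
-/

open MeasureTheory Real Set intervalIntegral

/-- The length of `[a, a + τ] ∩ [0, t]`. -/
noncomputable def boxOverlap (t τ a : ℝ) : ℝ := max (min t (a + τ) - max a 0) 0

section boxOverlap

variable {t τ a : ℝ}

theorem continuous_boxOverlap : Continuous (boxOverlap t τ) := by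
  unfold boxOverlap
  fun_prop

theorem boxOverlap_eq_zero_of_notMem (ha : a ∉ Ioc (-τ) t) : boxOverlap t τ a = 0 := by
  rw [mem_Ioc, not_and_or, not_lt, not_le] at ha
  refine max_eq_right (sub_nonpos.mpr ?_)
  rcases ha with ha | ha
  · exact (min_le_right _ _).trans (by linarith [le_max_right a 0])
  · exact (min_le_left _ _).trans (by linarith [le_max_left a 0])

theorem boxOverlap_of_mem_Icc_neg (hτt : τ ≤ t) (ha : a ∈ Icc (-τ) 0) :
    boxOverlap t τ a = a + τ := by
  obtain ⟨h₁, h₂⟩ := ha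
  rw [boxOverlap, max_eq_right h₂, min_eq_right (by linarith), sub_zero,
    max_eq_left (by linarith)]

theorem boxOverlap_of_mem_Icc (hτ : 0 ≤ τ) (ha : a ∈ Icc 0 (t - τ)) : boxOverlap t τ a = τ := by
  obtain ⟨h₁, h₂⟩ := ha
  rw [boxOverlap, max_eq_left h₁, min_eq_right (by linarith), add_sub_cancel_left,
    max_eq_left hτ]

theorem boxOverlap_of_mem_Icc_sub (hτt : τ ≤ t) (ha : a ∈ Icc (t - τ) t) :
    boxOverlap t τ a = t - a := by
  obtain ⟨h₁, h₂⟩ := ha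
  rw [boxOverlap, min_eq_left (by linarith), max_eq_left (show 0 ≤ a by linarith),
    max_eq_left (by linarith)]

theorem integral_comp_boxOverlap {φ : ℝ → ℝ} (hφ : Continuous φ) (hφ₀ : φ 0 = 0)
    (hτ : 0 ≤ τ) (hτt : τ ≤ t) :
    ∫ a, φ (boxOverlap t τ a) = (t - τ) * φ τ + 2 * ∫ x in 0..τ, φ x := by
  have hint (u v : ℝ) : IntervalIntegrable (fun a ↦ φ (boxOverlap t τ a)) volume u v :=
    (hφ.comp continuous_boxOverlap).intervalIntegrable u v
  calc ∫ a, φ (boxOverlap t τ a)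
      = ∫ a in Ioc (-τ) t, φ (boxOverlap t τ a) :=
        (setIntegral_eq_integral_of_forall_compl_eq_zero fun a ha ↦ by
          rw [boxOverlap_eq_zero_of_notMem ha, hφ₀]).symm
    _ = ∫ a in (-τ)..t, φ (boxOverlap t τ a) := (integral_of_le (by linarith)).symm
    _ = (∫ a in (-τ)..0, φ (boxOverlap t τ a)) + (∫ a in 0..(t - τ), φ (boxOverlap t τ a)) +
          ∫ a in (t - τ)..t, φ (boxOverlap t τ a) := by
        rw [integral_add_adjacent_intervals (hint _ _) (hint _ _),
          integral_add_adjacent_intervals (hint _ _) (hint _ _)]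
    _ = (∫ a in (-τ)..0, φ (a + τ)) + (∫ _ in 0..(t - τ), φ τ) + ∫ a in (t - τ)..t, φ (t - a) := by
        congr 1
        · congr 1
          · refine integral_congr fun a ha ↦ ?_
            rw [uIcc_of_le (by linarith)] at ha
            rw [boxOverlap_of_mem_Icc_neg hτt ha]
          · refine integral_congr fun a ha ↦ ?_
            rw [uIcc_of_le (by linarith)] at ha
            rw [boxOverlap_of_mem_Icc hτ ha]
        · refine integral_congr fun a ha ↦ ?_
          rw [uIcc_of_le (by linarith)] at ha
          rw [boxOverlap_of_mem_Icc_sub hτt ha]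
    _ = (t - τ) * φ τ + 2 * ∫ x in 0..τ, φ x := by
        rw [integral_comp_add_right, integral_comp_sub_left, intervalIntegral.integral_const,
          smul_eq_mul, neg_add_cancel, zero_add, sub_zero, sub_self, sub_sub_cancel]
        ring

end boxOverlap

theorem integral_one_sub_exp_neg_mul {l : ℝ} (hl : l ≠ 0) (τ : ℝ) :
    ∫ x in 0..τ, (1 - exp (-l * x)) = τ - (1 - exp (-l * τ)) / l := by
  have hexp : Continuous fun x ↦ exp (-l * x) := by fun_prop
  rw [intervalIntegral.integral_sub intervalIntegrable_const (hexp.intervalIntegrable _ _),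
    intervalIntegral.integral_const, integral_comp_mul_left (fun x ↦ exp x) (neg_ne_zero.mpr hl),
    integral_exp, mul_zero, exp_zero, smul_eq_mul, sub_zero, inv_neg]
  ring

/-- Deterministic core of the Box Model mean-function computation, case `τ < t`
(Proposition 2): for fixed rate `l > 0` and lifespan `0 < τ < t`,
`∫ (1 − exp(−l·|[a, a+τ] ∩ [0, t]|)) da = 2τ + (1 − e^{−lτ})(t − τ − 2/l)`. -/
theorem box_model_integral_of_lt (l t τ : ℝ) (hl : 0 < l) (hτ : 0 < τ) (hτt : τ < t) :
    ∫ a : ℝ, (1 - Real.exp (-l * max (min t (a + τ) - max a 0) 0)) =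
      2 * τ + (1 - Real.exp (-l * τ)) * (t - τ - 2 / l) := by
  refine (integral_comp_boxOverlap (φ := fun x ↦ 1 - exp (-l * x)) (by fun_prop) (by simp)
    hτ.le hτt.le).trans ?_
  rw [integral_one_sub_exp_neg_mul hl.ne']
  field_simp
  ring
end

section
/- Let λ > 0 and let c, τ be reals with 0 < c ≤ τ. Then the series ∑_{k=2}^{∞} (k − 1) · (1 − (1 − c/τ)^k) · e^{−λτ} (λτ)^k / k! converges and equals (λτ − 1)(1 − e^{−λc}) + λc · e^{−λc}. -/
open Real
open scoped Nat

/-!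
Since `∑ (k - 1) x^k / k! = (x - 1) e^x`, splitting `(k - 1)(1 - q^k) μ^k / k!` into the series at
`x = μ` and at `x = qμ` gives `(μ - 1) - (qμ - 1) e^{-(1-q)μ}` after multiplying by `e^{-μ}`. With
`μ = λτ` and `q = 1 - c/τ` we have `(1 - q)μ = λc`; the terms `k = 0, 1` vanish, so restricting to
`k ≥ 2` changes nothing.
-/

theorem Real.hasSum_pow_div_factorial (x : ℝ) : HasSum (fun n : ℕ => x ^ n / n !) (exp x) := by
  rw [exp_eq_exp_ℝ]
  exact NormedSpace.expSeries_div_hasSum_exp x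

theorem Real.hasSum_natCast_mul_pow_div_factorial (x : ℝ) :
    HasSum (fun n : ℕ => n * x ^ n / n !) (x * exp x) := by
  have hshift : HasSum (fun n : ℕ => ((n + 1 : ℕ) : ℝ) * x ^ (n + 1) / (n + 1)!) (x * exp x) := by
    refine ((hasSum_pow_div_factorial x).mul_left x).congr_fun fun n => ?_
    rw [Nat.factorial_succ]
    push_cast
    field_simp
    ring
  simpa using (hasSum_nat_add_iff (f := fun n : ℕ => (n : ℝ) * x ^ n / n !) 1).mp hshift

theorem Real.hasSum_natCast_sub_one_mul_pow_div_factorial (x : ℝ) :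
    HasSum (fun n : ℕ => (n - 1) * x ^ n / n !) ((x - 1) * exp x) := by
  simpa only [sub_mul, sub_div, one_mul] using
    (hasSum_natCast_mul_pow_div_factorial x).sub (hasSum_pow_div_factorial x)

theorem hasSum_natCast_sub_one_mul_one_sub_pow_mul_poisson (μ q : ℝ) :
    HasSum (fun k : ℕ => (k - 1) * (1 - q ^ k) * (exp (-μ) * μ ^ k / k !))
      ((μ - 1) - (q * μ - 1) * exp (-((1 - q) * μ))) := by
  have hvalue : exp (-μ) * ((μ - 1) * exp μ - (q * μ - 1) * exp (q * μ))
      = (μ - 1) - (q * μ - 1) * exp (-((1 - q) * μ)) := by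
    rw [show -((1 - q) * μ) = -μ + q * μ by ring, exp_add, exp_neg]
    field_simp
  rw [← hvalue]
  refine (((hasSum_natCast_sub_one_mul_pow_div_factorial μ).sub
    (hasSum_natCast_sub_one_mul_pow_div_factorial (q * μ))).mul_left (exp (-μ))).congr_fun
      fun k => ?_
  rw [mul_pow]
  ring

theorem poisson_hits_sum_truncated_general (lam c τ : ℝ) (hc : 0 < c) (hcτ : c ≤ τ) :
    HasSum (fun k : ℕ => if 2 ≤ k then
        ((k : ℝ) - 1) * (1 - (1 - c / τ) ^ k) *
          (Real.exp (-(lam * τ)) * (lam * τ) ^ k / (Nat.factorial k)) else 0)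
      ((lam * τ - 1) * (1 - Real.exp (-(lam * c))) + lam * c * Real.exp (-(lam * c))) := by
  have hτ : τ ≠ 0 := (hc.trans_le hcτ).ne'
  have hthin : (1 - (1 - c / τ)) * (lam * τ) = lam * c := by
    field_simp
    ring
  have hseries := hasSum_natCast_sub_one_mul_one_sub_pow_mul_poisson (lam * τ) (1 - c / τ)
  rw [hthin, show (1 - c / τ) * (lam * τ) = lam * τ - lam * c by rw [← hthin]; ring] at hseries
  rw [show (lam * τ - 1) * (1 - exp (-(lam * c))) + lam * c * exp (-(lam * c))
    = (lam * τ - 1) - (lam * τ - lam * c - 1) * exp (-(lam * c)) by ring]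
  refine hseries.congr_fun fun k => ?_
  rcases lt_or_ge k 2 with hk | hk
  · interval_cases k <;> simp
  · rw [if_pos hk]

/-- Case `τ ≥ t_C` of Proposition 3 (with `c = t_C`): summing the conditional
expected hit counts `(k−1)(1−(1−c/τ)^k)` against the Poisson(λτ) pmf gives
`(λτ − 1)(1 − e^{−λc}) + λc e^{−λc}`. -/
theorem poisson_hits_sum_truncated (lam c τ : ℝ) (hlam : 0 < lam) (hc : 0 < c) (hcτ : c ≤ τ) :
    HasSum (fun k : ℕ => if 2 ≤ k then
        ((k : ℝ) - 1) * (1 - (1 - c / τ) ^ k) *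
          (Real.exp (-(lam * τ)) * (lam * τ) ^ k / (Nat.factorial k)) else 0)
      ((lam * τ - 1) * (1 - Real.exp (-(lam * c))) + lam * c * Real.exp (-(lam * c))) :=
  poisson_hits_sum_truncated_general lam c τ hc hcτ
end
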